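/- arXiv:2105.04140 — 5 statements merged into one kernel-verified Lean document; each statement's English description precedes it below -/
import Mathlib

section
/- Let (σ_k)_{k≥1} be nonnegative reals, (α_k)_{k≥1} reals, τ > 0, and let ζ_k = exp(σ_k √τ Z_k + (α_k − σ_k²/2) τ), where (Z_k) are independent standard Gaussian random variables. If there exists ε > 0 such that sup_{k≥1} [ (1+ε) σ_k √(2 log k) + (α_k − σ_k²/2) √τ ] < ∞, then ℙ( sup_{k≥1} ζ_k < ∞ ) = 1; that is, almost surely the diagonal operator with eigenvalues (ζ_k) is a bounded operator, so the diagonal equation defines a stochastic flow of bounded operators (sufficiency part of Proposition 4.1(ii)). -/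
/-!
By the Gaussian tail bound `ℙ(Z ≥ b) ≤ exp(-b²/2)`, the events `Z k ≥ c √(2 log k)` with `c > 1`
have probabilities at most `k^(-c²)`, which are summable; by Borel–Cantelli, almost surely
`Z k < (1 + ε) √(2 log k)` for all large `k`. For such `k` the exponent of `ζ k` is at most
`√τ ((1 + ε) σ k √(2 log k) + (α k - σ k² / 2) √τ)`, which is bounded by hypothesis.
-/

open MeasureTheory ProbabilityTheory Filter Real

section

variable {Ω : Type*} [MeasurableSpace Ω] {P : Measure Ω}

lemma hasSubgaussianMGF_of_map_eq_gaussianReal {X : Ω → ℝ} {v : NNReal}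
    (hX : P.map X = gaussianReal 0 v) : HasSubgaussianMGF X v P where
  integrable_exp_mul t := by
    have hX_meas : AEMeasurable X P := aemeasurable_of_map_neZero (by rw [hX]; infer_instance)
    have h := integrable_exp_mul_gaussianReal (μ := 0) (v := v) t
    rw [← hX] at h
    exact (integrable_map_measure (by fun_prop) hX_meas).mp h
  mgf_le t := by rw [mgf_gaussianReal hX, zero_mul, zero_add]

lemma summable_exp_neg_mul_log {p : ℝ} (hp : 1 < p) :
    Summable fun k : ℕ => exp (-(p * log k)) := by
  rw [← summable_nat_add_iff 1]
  refine ((summable_nat_add_iff 1).mpr (summable_nat_rpow.mpr (neg_lt_neg hp))).congr fun k => ?_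
  rw [rpow_def_of_pos (by positivity)]
  push_cast
  ring_nf

lemma ae_eventually_lt_mul_sqrt_two_mul_log [IsProbabilityMeasure P] {Z : ℕ → Ω → ℝ}
    (hZ : ∀ k, P.map (Z k) = gaussianReal 0 1) {c : ℝ} (hc : 1 < c) :
    ∀ᵐ ω ∂P, ∀ᶠ k in atTop, Z k ω < c * √(2 * log k) := by
  have h_tail (k : ℕ) :
      P {ω | c * √(2 * log k) ≤ Z k ω} ≤ ENNReal.ofReal (exp (-(c ^ 2 * log k))) := by
    have h_sq : (c * √(2 * log k)) ^ 2 = 2 * (c ^ 2 * log k) := by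
      rw [mul_pow, sq_sqrt (by positivity)]
      ring
    rw [← ofReal_measureReal]
    refine ENNReal.ofReal_le_ofReal ?_
    convert (hasSubgaussianMGF_of_map_eq_gaussianReal (hZ k)).measure_ge_le
      (by positivity : 0 ≤ c * √(2 * log k)) using 2
    rw [h_sq]
    push_cast
    ring
  have h_sum : ∑' k : ℕ, P {ω | c * √(2 * log k) ≤ Z k ω} ≠ ⊤ := by
    refine ne_top_of_le_ne_top ?_ (ENNReal.tsum_le_tsum h_tail)
    rw [← ENNReal.ofReal_tsum_of_nonneg (fun k => (exp_pos _).le)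
      (summable_exp_neg_mul_log (by nlinarith))]
    exact ENNReal.ofReal_ne_top
  filter_upwards [ae_eventually_notMem h_sum] with ω hω
  exact hω.mono fun k hk => not_le.mp hk

end

theorem stmt1_general {Ω : Type*} [MeasurableSpace Ω] (P : Measure Ω) [IsProbabilityMeasure P]
    (Z : ℕ → Ω → ℝ)
    (hgauss : ∀ k, Measure.map (Z k) P = gaussianReal 0 1)
    (σ α : ℕ → ℝ) (hσ : ∀ k, 0 ≤ σ k) (τ : ℝ) (hτ : 0 < τ)
    (ζ : ℕ → Ω → ℝ)
    (hζ : ∀ k ω, ζ k ω =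
      Real.exp (σ k * Real.sqrt τ * Z k ω + (α k - σ k ^ 2 / 2) * τ))
    (hsup : ∃ ε : ℝ, 0 < ε ∧
      BddAbove (Set.range fun k : ℕ =>
        (1 + ε) * σ k * Real.sqrt (2 * Real.log k) + (α k - σ k ^ 2 / 2) * Real.sqrt τ)) :
    P {ω | BddAbove (Set.range fun k => ζ k ω)} = 1 := by
  obtain ⟨ε, hε, M, hM⟩ := hsup
  have hζ_le (k : ℕ) (ω : Ω) (hZ : Z k ω < (1 + ε) * √(2 * log k)) :
      ζ k ω ≤ exp (√τ * M) := by
    rw [hζ, exp_le_exp]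
    have := hσ k
    calc σ k * √τ * Z k ω + (α k - σ k ^ 2 / 2) * τ
        ≤ σ k * √τ * ((1 + ε) * √(2 * log k)) + (α k - σ k ^ 2 / 2) * (√τ * √τ) := by
          rw [mul_self_sqrt hτ.le]
          gcongr
      _ = √τ * ((1 + ε) * σ k * √(2 * log k) + (α k - σ k ^ 2 / 2) * √τ) := by ring
      _ ≤ √τ * M := by gcongr; exact hM (Set.mem_range_self k)
  have h_ae : ∀ᵐ ω ∂P, BddAbove (Set.range fun k => ζ k ω) := by
    filter_upwards [ae_eventually_lt_mul_sqrt_two_mul_log hgauss (by linarith : 1 < 1 + ε)]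
      with ω hω
    exact (isBoundedUnder_of_eventually_le (hω.mono fun k => hζ_le k ω)).bddAbove_range
  exact (measure_congr (ae_eq_univ.mpr h_ae)).trans measure_univ

/-- Sufficiency part of Proposition 4.1(ii): if for some `ε > 0` the sequence
`(1+ε) σ k √(2 log k) + (α k − σ k²/2) √τ` is bounded above, then almost surely the
eigenvalues `ζ k = exp(σ k √τ Z k + (α k − σ k²/2) τ)` form a bounded sequence, i.e. the
diagonal operator is bounded and the equation defines a stochastic flow. -/
theorem stmt1 {Ω : Type*} [MeasurableSpace Ω] (P : Measure Ω) [IsProbabilityMeasure P]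
    (Z : ℕ → Ω → ℝ) (hZmeas : ∀ k, Measurable (Z k))
    (hindep : iIndepFun Z P)
    (hgauss : ∀ k, Measure.map (Z k) P = gaussianReal 0 1)
    (σ α : ℕ → ℝ) (hσ : ∀ k, 0 ≤ σ k) (τ : ℝ) (hτ : 0 < τ)
    (ζ : ℕ → Ω → ℝ)
    (hζ : ∀ k ω, ζ k ω =
      Real.exp (σ k * Real.sqrt τ * Z k ω + (α k - σ k ^ 2 / 2) * τ))
    (hsup : ∃ ε : ℝ, 0 < ε ∧
      BddAbove (Set.range fun k : ℕ =>
        (1 + ε) * σ k * Real.sqrt (2 * Real.log k) + (α k - σ k ^ 2 / 2) * Real.sqrt τ)) :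
    P {ω | BddAbove (Set.range fun k => ζ k ω)} = 1 :=
  stmt1_general P Z hgauss σ α hσ τ hτ ζ hζ hsup
end

section
/- Let (σ_k)_{k≥1} be a sequence of nonnegative real numbers such that for every t > 0 one has sup_{k≥1} ( σ_k √(2 log k) − (σ_k²/2) √t ) < ∞. Then no real number c with 0 < c < ∞ is a cluster (accumulation) point of the sequence (σ_k); i.e. every accumulation point of (σ_k) in [0, +∞] is either 0 or +∞. -/
/-!
Take `t = 1`. Whenever `σ k` lies in `(c/2, 2c)`, the `k`-th term is at least
`(c/2) √(2 log k) − 2c²`; a cluster point `c > 0` provides such `k` arbitrarily large, so the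
terms are unbounded above.
-/

open Filter Set Real

theorem tendsto_sqrt_two_mul_log_natCast_atTop :
    Tendsto (fun k : ℕ => √(2 * log k)) atTop atTop :=
  tendsto_sqrt_atTop.comp <|
    (tendsto_log_atTop.comp tendsto_natCast_atTop_atTop).const_mul_atTop two_pos

theorem not_mapClusterPt_of_bddAbove_mul_sub_sq {ι : Type*} {l : Filter ι} {σ g : ι → ℝ}
    {t c : ℝ} (hg : Tendsto g l atTop) (ht : 0 ≤ t)
    (hbdd : BddAbove (range fun i => σ i * g i - σ i ^ 2 / 2 * t)) (hc : 0 < c) :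
    ¬ MapClusterPt c l σ := by
  intro hcl
  obtain ⟨M, hM⟩ := hbdd
  have hnear : ∃ᶠ i in l, σ i ∈ Ioo (c / 2) (2 * c) :=
    mapClusterPt_iff_frequently.mp hcl _ (Ioo_mem_nhds (by linarith) (by linarith))
  have hlarge : ∀ᶠ i in l, 0 ≤ g i ∧ M + 2 * c ^ 2 * t < c / 2 * g i :=
    (hg.eventually_ge_atTop 0).and
      ((hg.const_mul_atTop (half_pos hc)).eventually_gt_atTop _)
  obtain ⟨i, ⟨hlo, hhi⟩, hg0, hgM⟩ := (hnear.and_eventually hlarge).exists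
  have hle : σ i * g i - σ i ^ 2 / 2 * t ≤ M := hM ⟨i, rfl⟩
  have hlin : c / 2 * g i ≤ σ i * g i := mul_le_mul_of_nonneg_right hlo.le hg0
  have hsq : σ i ^ 2 ≤ 4 * c ^ 2 := by nlinarith
  nlinarith [mul_le_mul_of_nonneg_right hsq ht]

theorem stmt2_general (σ : ℕ → ℝ)
    (h : ∀ t : ℝ, 0 < t →
      BddAbove (Set.range fun k : ℕ =>
        σ k * Real.sqrt (2 * Real.log k) - σ k ^ 2 / 2 * Real.sqrt t)) :
    ∀ c : ℝ, 0 < c → ¬ MapClusterPt c Filter.atTop σ := fun _ hc =>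
  not_mapClusterPt_of_bddAbove_mul_sub_sq tendsto_sqrt_two_mul_log_natCast_atTop
    (sqrt_nonneg 1) (h 1 one_pos) hc

/-- Proposition 4.3(i): if for every `t > 0` the sequence
`σ k √(2 log k) − (σ k²/2) √t` is bounded above, then no real `c` with `0 < c < ∞` is an
accumulation (cluster) point of the sequence `(σ k)`; that is, every accumulation point of
`(σ k)` in `[0, +∞]` is either `0` or `+∞`. -/
theorem stmt2 (σ : ℕ → ℝ) (hσ : ∀ k, 0 ≤ σ k)
    (h : ∀ t : ℝ, 0 < t →
      BddAbove (Set.range fun k : ℕ =>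
        σ k * Real.sqrt (2 * Real.log k) - σ k ^ 2 / 2 * Real.sqrt t)) :
    ∀ c : ℝ, 0 < c → ¬ MapClusterPt c Filter.atTop σ :=
  stmt2_general σ h
end

section
/- Let (σ_k)_{k≥1} be a sequence of nonnegative real numbers such that for every t > 0 one has sup_{k≥1} ( σ_k √(2 log k) − (σ_k²/2) √t ) < ∞. If σ_k → 0 as k → ∞, then sup_{k≥1} σ_k √(log k) < ∞. -/
open Filter Set Real

/-- First (deterministic) assertion of Proposition 4.3(ii): if for every `t > 0` the
sequence `σ k √(2 log k) − (σ k²/2) √t` is bounded above and `σ k → 0`, then the sequence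
`σ k √(log k)` is bounded above. -/
theorem stmt3 (σ : ℕ → ℝ) (hσ : ∀ k, 0 ≤ σ k)
    (h : ∀ t : ℝ, 0 < t →
      BddAbove (Set.range fun k : ℕ =>
        σ k * Real.sqrt (2 * Real.log k) - σ k ^ 2 / 2 * Real.sqrt t))
    (hσ0 : Tendsto σ atTop (nhds 0)) :
    BddAbove (Set.range fun k : ℕ => σ k * Real.sqrt (Real.log k)) := by
  obtain ⟨M, hM⟩ := h 1 one_pos
  obtain ⟨B, hB⟩ : BddAbove (range fun k => σ k ^ 2 / 2) :=
    hσ0.bddAbove_range.range_comp_of_nonneg (g := fun x => x ^ 2 / 2) hσ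
      fun a ha b _ hab => by dsimp only; gcongr
  refine ⟨M + B, forall_mem_range.2 fun k => ?_⟩
  calc σ k * √(log k) ≤ σ k * √(2 * log k) :=
        mul_le_mul_of_nonneg_left (sqrt_le_sqrt (by linarith [log_natCast_nonneg k])) (hσ k)
    _ = (σ k * √(2 * log k) - σ k ^ 2 / 2 * √1) + σ k ^ 2 / 2 := by rw [sqrt_one]; ring
    _ ≤ M + B := add_le_add (hM (mem_range_self k)) (hB (mem_range_self k))
end

section
/- Let (σ_k)_{k≥1} be a sequence of nonnegative real numbers such that for every t > 0 one has sup_{k≥1} ( σ_k √(2 log k) − (σ_k²/2) √t ) < ∞. If σ_k → +∞ as k → ∞, then σ_k / √(log k) → +∞ as k → ∞. -/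
/-!
If `σ √(2 log k) − (σ²/2) u ≤ C` and `σ √(2 log k) ≥ 2C`, then `√(2 log k) ≤ σ u`. Since
`σ k √(2 log k) → ∞`, the second condition holds eventually, so for every `u > 0` we get
`σ k / √(2 log k) ≥ 1/u` for large `k`; letting `u = √t ↓ 0` gives the claim.
-/

open Filter

lemma le_mul_of_mul_sub_sq_le {x a u C : ℝ} (hx : 0 < x)
    (h : x * a - x ^ 2 / 2 * u ≤ C) (hC : 2 * C ≤ x * a) : a ≤ x * u := by
  nlinarith

lemma tendsto_sqrt_two_mul_log_natCast :
    Tendsto (fun k : ℕ => Real.sqrt (2 * Real.log k)) atTop atTop :=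
  Real.tendsto_sqrt_atTop.comp <|
    (Real.tendsto_log_atTop.comp tendsto_natCast_atTop_atTop).const_mul_atTop two_pos

lemma eventually_mul_sqrt_two_mul_log_le (σ : ℕ → ℝ)
    (h : ∀ t : ℝ, 0 < t →
      BddAbove (Set.range fun k : ℕ =>
        σ k * Real.sqrt (2 * Real.log k) - σ k ^ 2 / 2 * Real.sqrt t))
    (hσinf : Tendsto σ atTop atTop) {M : ℝ} (hM : 0 < M) :
    ∀ᶠ k : ℕ in atTop, M * Real.sqrt (2 * Real.log k) ≤ σ k := by
  obtain ⟨C, hC⟩ := h (M⁻¹ ^ 2) (by positivity)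
  have hprod : Tendsto (fun k : ℕ => σ k * Real.sqrt (2 * Real.log k)) atTop atTop :=
    hσinf.atTop_mul_atTop₀ tendsto_sqrt_two_mul_log_natCast
  filter_upwards [hσinf.eventually_gt_atTop 0, hprod.eventually_ge_atTop (2 * C)]
    with k hσk hCk
  have hbound := hC (Set.mem_range_self k)
  rw [Real.sqrt_sq (by positivity)] at hbound
  have := le_mul_of_mul_sub_sq_le hσk hbound hCk
  rwa [← div_eq_mul_inv, le_div_iff₀ hM, mul_comm] at this

theorem stmt5_general (σ : ℕ → ℝ)
    (h : ∀ t : ℝ, 0 < t →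
      BddAbove (Set.range fun k : ℕ =>
        σ k * Real.sqrt (2 * Real.log k) - σ k ^ 2 / 2 * Real.sqrt t))
    (hσinf : Tendsto σ atTop atTop) :
    Tendsto (fun k : ℕ => σ k / Real.sqrt (Real.log k)) atTop atTop := by
  refine tendsto_atTop.2 fun M => ?_
  have hlog_pos : ∀ᶠ k : ℕ in atTop, 0 < Real.log k :=
    (Real.tendsto_log_atTop.comp tendsto_natCast_atTop_atTop).eventually_gt_atTop 0
  filter_upwards [hlog_pos,
    eventually_mul_sqrt_two_mul_log_le σ h hσinf (lt_max_of_lt_right one_pos : (0 : ℝ) < max M 1)]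
    with k hlog hk
  have hsqrt_le : Real.sqrt (Real.log k) ≤ Real.sqrt (2 * Real.log k) :=
    Real.sqrt_le_sqrt (by linarith)
  rw [le_div_iff₀ (Real.sqrt_pos.2 hlog)]
  calc M * Real.sqrt (Real.log k) ≤ max M 1 * Real.sqrt (2 * Real.log k) := by
        gcongr
        exact le_max_left _ _
    _ ≤ σ k := hk

/-- First (deterministic) assertion of Proposition 4.3(iii): if for every `t > 0` the
sequence `σ k √(2 log k) − (σ k²/2) √t` is bounded above and `σ k → +∞`, then
`σ k / √(log k) → +∞`. -/
theorem stmt5 (σ : ℕ → ℝ) (hσ : ∀ k, 0 ≤ σ k)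
    (h : ∀ t : ℝ, 0 < t →
      BddAbove (Set.range fun k : ℕ =>
        σ k * Real.sqrt (2 * Real.log k) - σ k ^ 2 / 2 * Real.sqrt t))
    (hσinf : Tendsto σ atTop atTop) :
    Tendsto (fun k : ℕ => σ k / Real.sqrt (Real.log k)) atTop atTop :=
  stmt5_general σ h hσinf
end

section
/- Let (σ_k)_{k≥1} be nonnegative reals with σ_k / √(log k) → +∞ as k → ∞, let (Z_k) be independent standard Gaussian random variables, and let t > 0. Then ℙ( Σ_{k≥1} exp( σ_k √t Z_k − σ_k² t / 2 ) < ∞ ) = 1; i.e. almost surely the diagonal operator with eigenvalues ζ_k = exp(σ_k √t Z_k − σ_k² t/2) has finite trace (is trace class). -/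
open MeasureTheory ProbabilityTheory Filter

/-!
Write `ζ_k = η_k ^ 2` with `η_k = exp (σ_k √t Z_k / 2 - σ_k² t / 4)`. The Gaussian moment generating
function gives `𝔼 η_k = exp (-σ_k² t / 8)`, and the growth of `σ_k` makes this at most `k⁻²` for
large `k`. Hence `∑ 𝔼 η_k < ∞`, so almost surely `∑ η_k < ∞`, and then `∑ η_k ^ 2 < ∞` too.
-/

lemma Summable.sq_of_nonneg {ι : Type*} {g : ι → ℝ} (hg : Summable g) (hg_nonneg : 0 ≤ g) :
    Summable fun i => g i ^ 2 :=
  (hg.mul_left (∑' i, g i)).of_nonneg_of_le (fun i => sq_nonneg (g i)) fun i => by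
    rw [sq]
    exact mul_le_mul_of_nonneg_right (hg.le_tsum i fun j _ => hg_nonneg j) (hg_nonneg i)

lemma summable_exp_neg_mul_sq_of_tendsto_div_sqrt_log {σ : ℕ → ℝ}
    (hσ : Tendsto (fun k : ℕ => σ k / Real.sqrt (Real.log k)) atTop atTop) {c : ℝ} (hc : 0 < c) :
    Summable fun k => Real.exp (-(c * σ k ^ 2)) := by
  refine (Real.summable_nat_pow_inv.2 one_lt_two).of_norm_bounded_eventually_nat ?_
  filter_upwards [hσ.eventually_ge_atTop (Real.sqrt (2 / c)), eventually_ge_atTop 2]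
    with k hk hk2
  have hlog : 0 < Real.log k := Real.log_pos (by exact_mod_cast hk2)
  have hratio : 2 / c ≤ σ k ^ 2 / Real.log k := by
    have := pow_le_pow_left₀ (Real.sqrt_nonneg _) hk 2
    rwa [Real.sq_sqrt (by positivity), div_pow, Real.sq_sqrt hlog.le] at this
  have hbound : 2 * Real.log k ≤ c * σ k ^ 2 := by
    rw [div_le_div_iff₀ hc hlog] at hratio
    linarith
  calc ‖Real.exp (-(c * σ k ^ 2))‖ = Real.exp (-(c * σ k ^ 2)) :=
        Real.norm_of_nonneg (Real.exp_nonneg _)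
    _ ≤ Real.exp (-(2 * Real.log k)) := Real.exp_le_exp.2 (neg_le_neg hbound)
    _ = ((k : ℝ) ^ 2)⁻¹ := by
      rw [Real.exp_neg, mul_comm, Real.exp_mul, Real.exp_log (by positivity), Real.rpow_two]

section Gaussian

variable {Ω : Type*} [MeasurableSpace Ω] {P : Measure Ω} {X : Ω → ℝ} {μ : ℝ} {v : NNReal}

lemma integrable_exp_mul_sub_of_map_eq_gaussianReal [NeZero P]
    (hX : P.map X = gaussianReal μ v) (b c : ℝ) :
    Integrable (fun ω => Real.exp (b * X ω - c)) P := by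
  have hint : Integrable (fun ω => Real.exp (b * X ω)) P := by
    rw [← mgf_pos_iff, mgf_gaussianReal hX]
    exact Real.exp_pos _
  simpa only [Real.exp_sub] using hint.div_const (Real.exp c)

lemma integral_exp_mul_sub_of_map_eq_gaussianReal (hX : P.map X = gaussianReal μ v) (b c : ℝ) :
    ∫ ω, Real.exp (b * X ω - c) ∂P = Real.exp (μ * b + v * b ^ 2 / 2 - c) := by
  simp only [Real.exp_sub]
  rw [integral_div, ← mgf, mgf_gaussianReal hX]

end Gaussian

lemma ae_summable_of_summable_integral_norm {ι Ω E : Type*} [Countable ι] [MeasurableSpace Ω]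
    {P : Measure Ω} [NormedAddCommGroup E] [CompleteSpace E] {f : ι → Ω → E}
    (hf : ∀ k, Integrable (f k) P) (hsum : Summable fun k => ∫ ω, ‖f k ω‖ ∂P) :
    ∀ᵐ ω ∂P, Summable fun k => f k ω := by
  have hnorm : ∑' k, eLpNorm (f k) 1 P ≠ ⊤ := by
    simp_rw [eLpNorm_one_eq_lintegral_enorm, ← ofReal_integral_norm_eq_lintegral_enorm (hf _)]
    rw [← ENNReal.ofReal_tsum_of_nonneg (fun k => integral_nonneg fun ω => norm_nonneg _) hsum]
    exact ENNReal.ofReal_ne_top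
  filter_upwards [summable_norm_of_tsum_eLpNorm_ne_top le_rfl
    (fun k => (hf k).aestronglyMeasurable) hnorm] with ω hω using hω.of_norm

theorem stmt6_general {Ω : Type*} [MeasurableSpace Ω] (P : Measure Ω) [IsProbabilityMeasure P]
    (σ : ℕ → ℝ)
    (hσinf : Tendsto (fun k : ℕ => σ k / Real.sqrt (Real.log k)) atTop atTop)
    (Z : ℕ → Ω → ℝ)
    (hgauss : ∀ k, Measure.map (Z k) P = gaussianReal 0 1)
    (t : ℝ) (ht : 0 < t) :
    P {ω | Summable fun k => Real.exp (σ k * Real.sqrt t * Z k ω - σ k ^ 2 * t / 2)} = 1 := by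
  set η : ℕ → Ω → ℝ := fun k ω => Real.exp (σ k * Real.sqrt t / 2 * Z k ω - σ k ^ 2 * t / 4)
  have hη_integral (k : ℕ) : ∫ ω, ‖η k ω‖ ∂P = Real.exp (-(t / 8 * σ k ^ 2)) := by
    simp only [η, Real.norm_of_nonneg (Real.exp_nonneg _)]
    rw [integral_exp_mul_sub_of_map_eq_gaussianReal (hgauss k), NNReal.coe_one, div_pow, mul_pow,
      Real.sq_sqrt ht.le]
    ring_nf
  have hη_summable : ∀ᵐ ω ∂P, Summable fun k => η k ω :=
    ae_summable_of_summable_integral_norm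
      (fun k => integrable_exp_mul_sub_of_map_eq_gaussianReal (hgauss k) _ _)
      (by simpa only [hη_integral] using
        summable_exp_neg_mul_sq_of_tendsto_div_sqrt_log hσinf (by positivity : 0 < t / 8))
  have hζ_summable : ∀ᵐ ω ∂P,
      Summable fun k => Real.exp (σ k * Real.sqrt t * Z k ω - σ k ^ 2 * t / 2) := by
    filter_upwards [hη_summable] with ω hω
    refine (hω.sq_of_nonneg fun k => Real.exp_nonneg _).congr fun k => ?_
    rw [sq, ← Real.exp_add]
    ring_nf
  exact (measure_congr (ae_eq_univ.2 hζ_summable)).trans measure_univ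

/-- Trace-class assertion of Proposition 4.3(iii): if `σ k / √(log k) → +∞`, then almost
surely `∑ k exp(σ k √t Z k − σ k² t/2) < ∞`, i.e. the diagonal flow operator with these
eigenvalues is trace class. -/
theorem stmt6 {Ω : Type*} [MeasurableSpace Ω] (P : Measure Ω) [IsProbabilityMeasure P]
    (σ : ℕ → ℝ) (hσ : ∀ k, 0 ≤ σ k)
    (hσinf : Tendsto (fun k : ℕ => σ k / Real.sqrt (Real.log k)) atTop atTop)
    (Z : ℕ → Ω → ℝ) (hZmeas : ∀ k, Measurable (Z k))
    (hindep : iIndepFun Z P)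
    (hgauss : ∀ k, Measure.map (Z k) P = gaussianReal 0 1)
    (t : ℝ) (ht : 0 < t) :
    P {ω | Summable fun k => Real.exp (σ k * Real.sqrt t * Z k ω - σ k ^ 2 * t / 2)} = 1 :=
  stmt6_general P σ hσinf Z hgauss t ht
end
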